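/- Let I = (G,q,π) be an instance of Unique Label Cover with OPT(I) ≥ 1 − ε for some 0 < ε < 1, and let G' be its label-extended graph. Then there exists a subset S of the vertex set of G' with μ_{G'}(S) = μ_{G'}/q and conductance φ_{G'}(S) at most ε. -/

import Mathlib

open scoped Classical
open Matrix

noncomputable section

namespace Sublinear

variable {V : Type*}

/-- The degree `d(v)` of a vertex, as a real number. -/
def deg [Fintype V] (G : SimpleGraph V) (v : V) : ℝ :=
  ((Finset.univ.filter fun u => G.Adj v u).card : ℝ)

/-- The volume `μ_G(S)` of a set of vertices. -/
def vol [Fintype V] (G : SimpleGraph V) (S : Set V) : ℝ :=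
  ∑ v ∈ Finset.univ.filter (fun v => v ∈ S), deg G v

/-- The number of ordered adjacent pairs `(u,v)` with `u ∈ S`, `v ∈ T`.
For disjoint `S`, `T` this equals the number `e_G(S,T)` of edges between `S` and `T`. -/
def eB [Fintype V] (G : SimpleGraph V) (S T : Set V) : ℝ :=
  (((Finset.univ : Finset (V × V)).filter
      fun p => p.1 ∈ S ∧ p.2 ∈ T ∧ G.Adj p.1 p.2).card : ℝ)

/-- The number `e_G(S)` of edges with both endpoints in `S`. -/
def eIn [Fintype V] (G : SimpleGraph V) (S : Set V) : ℝ := eB G S S / 2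

/-- The conductance `φ_G(S)` of a set of vertices. -/
def cond [Fintype V] (G : SimpleGraph V) (S : Set V) : ℝ :=
  eB G S Sᶜ / vol G S

/-- The conductance `φ_G` of the graph: the minimum of `φ_G(S)` over nonempty `S`
with `μ_G(S) ≤ μ_G/2`. -/
def conductance [Fintype V] (G : SimpleGraph V) : ℝ :=
  sInf {x | ∃ S : Set V, S.Nonempty ∧ vol G S ≤ vol G Set.univ / 2 ∧ x = cond G S}

/-- The label-extended graph `G'` of a Unique Label Cover instance `I = (G, q, π)`
(with labels `Fin q`): vertices are pairs `(u,i)`, and `(u,i)` is adjacent to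
`(v,j)` iff `{u,v}` is an edge of `G` and `j = π u v i`. -/
def ulcExt {V : Type*} (G : SimpleGraph V) {q : ℕ} (π : V → V → Equiv.Perm (Fin q))
    (hπ : ∀ u v, G.Adj u v → π v u = (π u v)⁻¹) : SimpleGraph (V × Fin q) where
  Adj p p' := G.Adj p.1 p'.1 ∧ p'.2 = π p.1 p'.1 p.2
  symm := by
    constructor
    rintro ⟨u, i⟩ ⟨v, j⟩ ⟨hadj, hj⟩
    refine ⟨hadj.symm, ?_⟩
    simp only at hj ⊢
    rw [hπ u v hadj, hj]
    simp
  loopless := by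
    constructor
    rintro ⟨u, i⟩ ⟨hadj, _⟩
    exact G.loopless.irrefl u hadj

/-- The fraction of the edges of `G` that are satisfied by the assignment `ψ`
in the Unique Label Cover instance `(G, q, π)`: an edge `{u,v}` is satisfied
if `ψ v = π u v (ψ u)`. -/
def ulcSatFrac [Fintype V] (G : SimpleGraph V) {q : ℕ}
    (π : V → V → Equiv.Perm (Fin q)) (ψ : V → Fin q) : ℝ :=
  (((Finset.univ : Finset (V × V)).filter
      fun p => G.Adj p.1 p.2 ∧ ψ p.2 = π p.1 p.2 (ψ p.1)).card : ℝ)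
    / eB G Set.univ Set.univ

/-! An assignment `ψ` picks out one label above each vertex, `S = {(v, ψ v)}`. Degrees lift
unchanged to the label-extended graph, so `μ(S) = μ_G = μ_{G'}/q`, and the edges of `G'` leaving
`S` are exactly the lifts of the edges violated by `ψ`, so `φ(S)` is the fraction of edges that `ψ`
violates. -/

section LabelExtended

variable (G : SimpleGraph V) {q : ℕ} (π : V → V → Equiv.Perm (Fin q))
  (hπ : ∀ u v, G.Adj u v → π v u = (π u v)⁻¹)

@[simp]
lemma ulcExt_adj {p p' : V × Fin q} :
    (ulcExt G π hπ).Adj p p' ↔ G.Adj p.1 p'.1 ∧ p'.2 = π p.1 p'.1 p.2 :=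
  Iff.rfl

def labelGraph (ψ : V → Fin q) : Set (V × Fin q) :=
  Set.range fun v => (v, ψ v)

variable [Fintype V]

lemma vol_univ_eq_eB_univ : vol G Set.univ = eB G Set.univ Set.univ := by
  simp only [vol, eB, deg, Set.mem_univ, true_and, Finset.filter_true]
  norm_cast
  rw [← Finset.univ_product_univ, Finset.card_filter, Finset.sum_product]
  exact Finset.sum_congr rfl fun v _ => Finset.card_filter _ _

lemma deg_ulcExt (v : V) (i : Fin q) : deg (ulcExt G π hπ) (v, i) = deg G v := by
  unfold deg
  norm_cast
  refine Finset.card_nbij' Prod.fst (fun u => (u, π v u i)) ?_ ?_ ?_ ?_ <;>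
    intro x <;> simp +contextual [Prod.ext_iff]

lemma vol_ulcExt_univ : vol (ulcExt G π hπ) Set.univ = q * vol G Set.univ := by
  simp only [vol, Set.mem_univ, Finset.filter_true, ← Finset.univ_product_univ,
    Finset.sum_product_right, deg_ulcExt, Finset.sum_const, Finset.card_univ, Fintype.card_fin,
    nsmul_eq_mul]

lemma vol_ulcExt_labelGraph (ψ : V → Fin q) :
    vol (ulcExt G π hπ) (labelGraph ψ) = vol G Set.univ := by
  have : Finset.univ.filter (· ∈ labelGraph ψ) = Finset.univ.image fun v => (v, ψ v) := by
    ext; simp [labelGraph]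
  rw [vol, this, Finset.sum_image fun u _ v _ h => congrArg Prod.fst h]
  simp [vol, deg_ulcExt]

lemma vol_ulcExt_labelGraph_eq_div (ψ : V → Fin q) :
    vol (ulcExt G π hπ) (labelGraph ψ) = vol (ulcExt G π hπ) Set.univ / q := by
  rw [vol_ulcExt_labelGraph, vol_ulcExt_univ]
  rcases Nat.eq_zero_or_pos q with rfl | hq
  · have : IsEmpty V := ⟨fun v => (ψ v).elim0⟩
    simp [vol]
  · field_simp

def satisfiedPairs (ψ : V → Fin q) : Finset (V × V) :=
  Finset.univ.filter fun p => G.Adj p.1 p.2 ∧ ψ p.2 = π p.1 p.2 (ψ p.1)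

def violatedPairs (ψ : V → Fin q) : Finset (V × V) :=
  Finset.univ.filter fun p => G.Adj p.1 p.2 ∧ ψ p.2 ≠ π p.1 p.2 (ψ p.1)

lemma ulcSatFrac_eq (ψ : V → Fin q) :
    ulcSatFrac G π ψ = (satisfiedPairs G π ψ).card / eB G Set.univ Set.univ :=
  rfl

lemma card_satisfiedPairs_add_card_violatedPairs (ψ : V → Fin q) :
    ((satisfiedPairs G π ψ).card : ℝ) + (violatedPairs G π ψ).card = eB G Set.univ Set.univ := by
  simp only [satisfiedPairs, violatedPairs, eB, Set.mem_univ, true_and]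
  norm_cast
  simpa only [Finset.filter_filter] using Finset.card_filter_add_card_filter_not
    (s := Finset.univ.filter fun p : V × V => G.Adj p.1 p.2) (fun p => ψ p.2 = π p.1 p.2 (ψ p.1))

lemma eB_ulcExt_labelGraph_compl (ψ : V → Fin q) :
    eB (ulcExt G π hπ) (labelGraph ψ) (labelGraph ψ)ᶜ = (violatedPairs G π ψ).card := by
  unfold eB violatedPairs
  norm_cast
  refine Finset.card_nbij' (fun p => (p.1.1, p.2.1))
    (fun p => ((p.1, ψ p.1), (p.2, π p.1 p.2 (ψ p.1)))) ?_ ?_ ?_ ?_ <;>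
    intro x <;> simp +contextual [labelGraph, Prod.ext_iff]
  grind

lemma cond_ulcExt_labelGraph_le (ψ : V → Fin q) :
    cond (ulcExt G π hπ) (labelGraph ψ) ≤ 1 - ulcSatFrac G π ψ := by
  rw [cond, vol_ulcExt_labelGraph, vol_univ_eq_eB_univ, eB_ulcExt_labelGraph_compl, ulcSatFrac_eq,
    ← card_satisfiedPairs_add_card_violatedPairs G π ψ]
  rcases eq_or_ne (((satisfiedPairs G π ψ).card : ℝ) + (violatedPairs G π ψ).card) 0 with h | h
  · simp [h]
  · rw [le_sub_iff_add_le, ← add_div, add_comm, div_self h]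

end LabelExtended

theorem ulc_completeness_small_conductance_set_general
    {V : Type*} [Fintype V] (G : SimpleGraph V)
    (q : ℕ)
    (π : V → V → Equiv.Perm (Fin q))
    (hπ : ∀ u v, G.Adj u v → π v u = (π u v)⁻¹)
    (ε : ℝ)
    (hopt : ∃ ψ : V → Fin q, 1 - ε ≤ ulcSatFrac G π ψ) :
    ∃ S : Set (V × Fin q),
      vol (ulcExt G π hπ) S = vol (ulcExt G π hπ) Set.univ / q ∧
      cond (ulcExt G π hπ) S ≤ ε := by
  obtain ⟨ψ, hψ⟩ := hopt
  exact ⟨labelGraph ψ, vol_ulcExt_labelGraph_eq_div G π hπ ψ,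
    (cond_ulcExt_labelGraph_le G π hπ ψ).trans (by linarith)⟩

/-- If `I = (G,q,π)` is a Unique Label Cover instance with
`OPT(I) ≥ 1 - ε`, `0 < ε < 1`, then the label-extended graph `G'` contains a set
`S` of volume `μ_{G'}/q` and conductance at most `ε`. -/
theorem ulc_completeness_small_conductance_set
    {V : Type*} [Fintype V] (G : SimpleGraph V)
    (hdeg : ∀ v, 1 ≤ deg G v)
    (q : ℕ) (hq : 1 ≤ q)
    (π : V → V → Equiv.Perm (Fin q))
    (hπ : ∀ u v, G.Adj u v → π v u = (π u v)⁻¹)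
    (ε : ℝ) (hε0 : 0 < ε) (hε1 : ε < 1)
    (hopt : ∃ ψ : V → Fin q, 1 - ε ≤ ulcSatFrac G π ψ) :
    ∃ S : Set (V × Fin q),
      vol (ulcExt G π hπ) S = vol (ulcExt G π hπ) Set.univ / q ∧
      cond (ulcExt G π hπ) S ≤ ε :=
  ulc_completeness_small_conductance_set_general G q π hπ ε hopt

end Sublinear
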